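/- Let A : R̄^n → R̄^n be an R̄-linear map, where R̄ is the ring of Colombeau generalized real numbers. Then the following are equivalent: (i) A is injective; (ii) A is surjective; (iii) det(A) is invertible in R̄. -/

import Mathlib

/-!
Over any commutative ring a surjective endomorphism of `Rⁿ` is bijective, and bijectivity is
equivalent to the determinant being a unit. By McCoy's theorem the determinant of an injective
endomorphism is not a zero divisor, so it remains to see that in `R̄` every non-zero-divisor is a
unit. If `x` is not invertible, then `|x ε|` drops below every power of `ε` along a sequence
`t k → 0`; the characteristic function of `{t k}` is then a nonzero idempotent annihilating `x`.
-/

noncomputable section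

open Real

/-- `P ε` holds for all sufficiently small `ε ∈ (0,1]`. -/
def SmallEv (P : ℝ → Prop) : Prop :=
  ∃ η : ℝ, 0 < η ∧ ∀ ε : ℝ, 0 < ε → ε ≤ η → P ε

/-- A net `x : (0,1] → ℝ` (modeled on all of `ℝ`) is moderate. -/
def Moderate (x : ℝ → ℝ) : Prop :=
  ∃ r : ℝ, SmallEv fun ε => |x ε| < ε ^ r

/-- A net is negligible. -/
def Negligible (x : ℝ → ℝ) : Prop :=
  ∀ n : ℕ, SmallEv fun ε => |x ε| < ε ^ (n : ℝ)

lemma smallEv_and {P Q : ℝ → Prop} (hP : SmallEv P) (hQ : SmallEv Q) :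
    SmallEv fun ε => P ε ∧ Q ε := by
  obtain ⟨a, ha, hP⟩ := hP
  obtain ⟨b, hb, hQ⟩ := hQ
  exact ⟨min a b, lt_min ha hb, fun ε hε hle =>
    ⟨hP ε hε (hle.trans (min_le_left _ _)), hQ ε hε (hle.trans (min_le_right _ _))⟩⟩

lemma moderate_zero : Moderate (0 : ℝ → ℝ) :=
  ⟨0, 1, one_pos, fun ε hε _ => by simp⟩

lemma moderate_one : Moderate (1 : ℝ → ℝ) := by
  refine ⟨-1, 1/2, by norm_num, fun ε hε hle => ?_⟩
  have h1 : ε < 1 := lt_of_le_of_lt hle (by norm_num)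
  show |(1 : ℝ → ℝ) ε| < ε ^ (-1 : ℝ)
  rw [Real.rpow_neg_one]
  simpa using (one_lt_inv₀ hε).mpr h1

lemma moderate_neg {x : ℝ → ℝ} (hx : Moderate x) : Moderate (-x) := by
  obtain ⟨r, η, hη, h⟩ := hx
  exact ⟨r, η, hη, fun ε hε hle => by simpa using h ε hε hle⟩

lemma moderate_add {x y : ℝ → ℝ} (hx : Moderate x) (hy : Moderate y) :
    Moderate (x + y) := by
  obtain ⟨r, hr⟩ := hx
  obtain ⟨s, hs⟩ := hy
  obtain ⟨η, hη, h⟩ := smallEv_and hr hs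
  refine ⟨min r s - 1, min η (1/2), lt_min hη (by norm_num), fun ε hε hle => ?_⟩
  have hεhalf : ε ≤ 1/2 := hle.trans (min_le_right _ _)
  have hε1 : ε ≤ 1 := hεhalf.trans (by norm_num)
  obtain ⟨h1, h2⟩ := h ε hε (hle.trans (min_le_left _ _))
  have h2inv : (2 : ℝ) ≤ ε⁻¹ := by
    rw [le_inv_comm₀ (by norm_num) hε]
    linarith
  calc |(x + y) ε| ≤ |x ε| + |y ε| := abs_add_le _ _
    _ < ε ^ r + ε ^ s := add_lt_add h1 h2
    _ ≤ ε ^ min r s + ε ^ min r s :=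
        add_le_add (Real.rpow_le_rpow_of_exponent_ge hε hε1 (min_le_left _ _))
          (Real.rpow_le_rpow_of_exponent_ge hε hε1 (min_le_right _ _))
    _ = 2 * ε ^ min r s := by ring
    _ ≤ ε⁻¹ * ε ^ min r s :=
        mul_le_mul_of_nonneg_right h2inv (Real.rpow_nonneg hε.le _)
    _ = ε ^ (min r s - 1) := by
        rw [← Real.rpow_neg_one ε, ← Real.rpow_add hε]
        ring_nf

lemma moderate_mul {x y : ℝ → ℝ} (hx : Moderate x) (hy : Moderate y) :
    Moderate (x * y) := by
  obtain ⟨r, hr⟩ := hx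
  obtain ⟨s, hs⟩ := hy
  obtain ⟨η, hη, h⟩ := smallEv_and hr hs
  refine ⟨r + s, η, hη, fun ε hε hle => ?_⟩
  obtain ⟨h1, h2⟩ := h ε hε hle
  have : |(x * y) ε| = |x ε| * |y ε| := by simp [abs_mul]
  rw [this, Real.rpow_add hε]
  exact mul_lt_mul'' h1 h2 (abs_nonneg _) (abs_nonneg _)

/-- The ring `E_M` of moderate nets, as a subring of `ℝ → ℝ`. -/
def EMring : Subring (ℝ → ℝ) where
  carrier := {x | Moderate x}
  mul_mem' := moderate_mul
  one_mem' := moderate_one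
  add_mem' := moderate_add
  zero_mem' := moderate_zero
  neg_mem' := moderate_neg

lemma negligible_zero : Negligible (0 : ℝ → ℝ) := fun n =>
  ⟨1, one_pos, fun ε hε _ => by simpa using Real.rpow_pos_of_pos hε (n : ℝ)⟩

lemma negligible_add {x y : ℝ → ℝ} (hx : Negligible x) (hy : Negligible y) :
    Negligible (x + y) := by
  intro n
  obtain ⟨η, hη, h⟩ := smallEv_and (hx (n + 1)) (hy (n + 1))
  refine ⟨min η (1/2), lt_min hη (by norm_num), fun ε hε hle => ?_⟩
  have hεhalf : ε ≤ 1/2 := hle.trans (min_le_right _ _)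
  obtain ⟨h1, h2⟩ := h ε hε (hle.trans (min_le_left _ _))
  have hcast : ((n + 1 : ℕ) : ℝ) = (n : ℝ) + 1 := by push_cast; ring
  have hsplit : ε ^ ((n + 1 : ℕ) : ℝ) = ε ^ (n : ℝ) * ε := by
    rw [hcast, Real.rpow_add hε, Real.rpow_one]
  calc |(x + y) ε| ≤ |x ε| + |y ε| := abs_add_le _ _
    _ < ε ^ ((n + 1 : ℕ) : ℝ) + ε ^ ((n + 1 : ℕ) : ℝ) := add_lt_add h1 h2
    _ = (2 * ε) * ε ^ (n : ℝ) := by rw [hsplit]; ring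
    _ ≤ 1 * ε ^ (n : ℝ) := by
        apply mul_le_mul_of_nonneg_right _ (Real.rpow_nonneg hε.le _)
        linarith
    _ = ε ^ (n : ℝ) := one_mul _

lemma negligible_smul {x y : ℝ → ℝ} (hx : Moderate x) (hy : Negligible y) :
    Negligible (x * y) := by
  intro n
  obtain ⟨r, hr⟩ := hx
  set k : ℕ := n + Nat.ceil (max 0 (-r)) with hk
  obtain ⟨η, hη, h⟩ := smallEv_and hr (hy k)
  refine ⟨min η 1, lt_min hη one_pos, fun ε hε hle => ?_⟩
  have hε1 : ε ≤ 1 := hle.trans (min_le_right _ _)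
  obtain ⟨h1, h2⟩ := h ε hε (hle.trans (min_le_left _ _))
  have hexp : (n : ℝ) ≤ r + (k : ℝ) := by
    have h1' : (-r) ≤ (Nat.ceil (max 0 (-r)) : ℝ) :=
      le_trans (le_max_right 0 (-r)) (Nat.le_ceil _)
    have : (k : ℝ) = (n : ℝ) + (Nat.ceil (max 0 (-r)) : ℝ) := by
      rw [hk]; push_cast; ring
    linarith
  show |(x * y) ε| < ε ^ (n : ℝ)
  have hxy : |(x * y) ε| = |x ε| * |y ε| := by simp [abs_mul]
  rw [hxy]
  calc |x ε| * |y ε| < ε ^ r * ε ^ (k : ℝ) :=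
        mul_lt_mul'' h1 h2 (abs_nonneg _) (abs_nonneg _)
    _ = ε ^ (r + (k : ℝ)) := (Real.rpow_add hε _ _).symm
    _ ≤ ε ^ (n : ℝ) := Real.rpow_le_rpow_of_exponent_ge hε hε1 hexp

/-- The ideal of negligible nets inside `E_M`. -/
def NegIdeal : Ideal EMring where
  carrier := {x | Negligible x.1}
  add_mem' := fun hx hy => negligible_add hx hy
  zero_mem' := negligible_zero
  smul_mem' := fun c _ hx => negligible_smul c.2 hx

/-- The ring of Colombeau generalized real numbers. -/
abbrev Rbar := EMring ⧸ NegIdeal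

instance : CommRing Rbar := inferInstance

/-- Class of a moderate net in `R̄`. -/
def mkR (x : EMring) : Rbar := Ideal.Quotient.mk NegIdeal x

/-- The valuation `V` on the quotient. -/
def VQ (x : Rbar) : ℝ :=
  sSup {r : ℝ | ∃ x' : EMring, mkR x' = x ∧ SmallEv fun ε => |x'.1 ε| < ε ^ r}

open Classical in
/-- sharp norm on `R̄`. -/
def normQ (x : Rbar) : ℝ := if x = 0 then 0 else Real.exp (-(VQ x))

/-- sharp distance on `R̄`. -/
def sharpDist (x y : Rbar) : ℝ := normQ (x - y)

/-- `x` is nonnegative: it has a representative which is nonnegative on `(0,1]`. -/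
def NonnegQ (x : Rbar) : Prop :=
  ∃ x' : EMring, mkR x' = x ∧ ∀ ε : ℝ, 0 < ε → ε ≤ 1 → 0 ≤ x'.1 ε

/-- `x` belongs to `V_r(0)`: some representative satisfies `|x_ε| < ε^r` eventually. -/
def InVr (r : ℝ) (x : Rbar) : Prop :=
  ∃ x' : EMring, mkR x' = x ∧ SmallEv fun ε => |x'.1 ε| < ε ^ r

/-- `x ≥ α^m`: some representative satisfies `x_ε ≥ ε^m` eventually. -/
def GeAlpha (m : ℝ) (x : Rbar) : Prop :=
  ∃ x' : EMring, mkR x' = x ∧ SmallEv fun ε => ε ^ m ≤ x'.1 ε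

lemma idNet_moderate : Moderate (fun ε : ℝ => ε) := by
  refine ⟨0, 1/2, by norm_num, fun ε hε hle => ?_⟩
  show |ε| < ε ^ (0 : ℝ)
  rw [Real.rpow_zero, abs_of_pos hε]
  linarith

/-- The generalized number `α = [ε ↦ ε]`. -/
def alphaQ : Rbar := mkR ⟨fun ε => ε, idNet_moderate⟩

lemma chi_moderate (S : Set ℝ) : Moderate (S.indicator fun _ => (1 : ℝ)) := by
  refine ⟨-1, 1/2, by norm_num, fun ε hε hle => ?_⟩
  have h1 : ε < 1 := lt_of_le_of_lt hle (by norm_num)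
  have hlt : (1 : ℝ) < ε ^ (-1 : ℝ) := by
    rw [Real.rpow_neg_one]
    exact (one_lt_inv₀ hε).mpr h1
  by_cases h : ε ∈ S <;> simp [Set.indicator, h] <;> linarith [hlt]

/-- Hypernatural numbers: moderate nets with values in `ℕ`. -/
def HyperNat : Type := {f : ℝ → ℕ // Moderate fun ε => (f ε : ℝ)}

/-- Strict order on hypernaturals: eventually pointwise. -/
def HNlt (m n : HyperNat) : Prop := SmallEv fun ε => m.1 ε < n.1 ε


open Filter Topology Function
open scoped nonZeroDivisors

namespace Matrix

variable {R : Type*} [CommRing R]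

theorem exists_mulVec_eq_zero_of_mul_det_submatrix_eq_zero {ι : Type*} :
    ∀ {n : ℕ} (A : Matrix ι (Fin n) R) {c : R}, c ≠ 0 →
      (∀ f : Fin n → ι, c * (A.submatrix f id).det = 0) → ∃ v ≠ 0, A *ᵥ v = 0
  | 0, A, c, hc, h => absurd (by simpa using h Fin.elim0) hc
  | n + 1, A, c, hc, h => by
    by_cases hlast : ∀ g : Fin n → ι, c * (A.submatrix g Fin.castSucc).det = 0
    · obtain ⟨w, hw, hAw⟩ :=
        exists_mulVec_eq_zero_of_mul_det_submatrix_eq_zero (A.submatrix id Fin.castSucc) hc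
          (by simpa [submatrix_submatrix] using hlast)
      refine ⟨Fin.snoc w 0, fun h0 => hw (funext fun j => by simpa using congrFun h0 j.castSucc),
        ?_⟩
      rw [← hAw]
      ext i
      simp [mulVec, dotProduct, Fin.sum_univ_castSucc]
    · obtain ⟨g, hg⟩ := not_forall.1 hlast
      -- cofactors of the rows `g` along a new first row: `A *ᵥ v` is `c` times an `(n+1)`-minor
      refine ⟨fun j => c * ((-1) ^ (j : ℕ) * (A.submatrix g j.succAbove).det), fun h0 => hg ?_, ?_⟩
      · simpa [mul_left_comm c] using congrFun h0 (Fin.last n)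
      · ext i
        have := h (Fin.cons i g)
        rw [det_succ_row_zero, Finset.mul_sum] at this
        simp only [mulVec, dotProduct, Pi.zero_apply]
        rw [← this]
        refine Finset.sum_congr rfl fun j _ => ?_
        simp only [submatrix, id_eq, of_apply, Fin.cons_zero, Fin.cons_succ]
        ring

theorem exists_mulVec_eq_zero_of_mul_det_eq_zero {n : ℕ} (A : Matrix (Fin n) (Fin n) R) {c : R}
    (hc : c ≠ 0) (h : c * A.det = 0) : ∃ v ≠ 0, A *ᵥ v = 0 := by
  refine exists_mulVec_eq_zero_of_mul_det_submatrix_eq_zero A hc fun f => ?_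
  by_cases hf : Injective f
  · obtain ⟨σ, rfl⟩ : ∃ σ : Equiv.Perm (Fin n), ⇑σ = f :=
      ⟨Equiv.ofBijective f hf.bijective_of_finite, rfl⟩
    rw [det_permute, mul_left_comm, h, mul_zero]
  · obtain ⟨i, j, hij, hne⟩ := Function.not_injective_iff.1 hf
    have hrow : A.submatrix f id i = A.submatrix f id j :=
      funext fun k => by rw [submatrix_apply, submatrix_apply, hij]
    rw [det_zero_of_row_eq hne hrow, mul_zero]

end Matrix

theorem LinearMap.det_mem_nonZeroDivisors_of_injective {R : Type*} [CommRing R] {n : ℕ}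
    {f : (Fin n → R) →ₗ[R] Fin n → R} (hf : Injective f) : LinearMap.det f ∈ R⁰ := by
  refine mem_nonZeroDivisors_iff_right.2 fun c hc => by_contra fun hc0 => ?_
  rw [← det_toMatrix'] at hc
  obtain ⟨v, hv, hfv⟩ := Matrix.exists_mulVec_eq_zero_of_mul_det_eq_zero _ hc0 hc
  rw [toMatrix'_mulVec] at hfv
  exact hv (hf (by rw [hfv, map_zero]))

theorem LinearMap.injective_iff_isUnit_det {R : Type*} [CommRing R] (hR : ∀ a ∈ R⁰, IsUnit a)
    {n : ℕ} (f : (Fin n → R) →ₗ[R] Fin n → R) : Injective f ↔ IsUnit (LinearMap.det f) :=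
  ⟨fun hf => hR _ (det_mem_nonZeroDivisors_of_injective hf),
    fun h => ((Module.End.isUnit_iff f).1 ((isUnit_iff_isUnit_det f).2 h)).1⟩

theorem LinearMap.surjective_iff_isUnit_det {R M : Type*} [CommRing R] [AddCommGroup M]
    [Module R M] [Module.Free R M] [Module.Finite R M] (f : M →ₗ[R] M) :
    Surjective f ↔ IsUnit (LinearMap.det f) := by
  rw [← isUnit_iff_isUnit_det, Module.End.isUnit_iff]
  exact ⟨OrzechProperty.bijective_of_surjective_endomorphism f, Bijective.surjective⟩

theorem smallEv_iff_eventually {P : ℝ → Prop} : SmallEv P ↔ ∀ᶠ ε in 𝓝[>] (0 : ℝ), P ε := by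
  rw [(nhdsGT_basis (0 : ℝ)).eventually_iff]
  constructor
  · rintro ⟨η, hη, h⟩
    exact ⟨η, hη, fun ε hε => h ε hε.1 hε.2.le⟩
  · rintro ⟨η, hη, h⟩
    exact ⟨η / 2, half_pos hη, fun ε hε hle => h ⟨hε, by linarith⟩⟩

theorem moderate_of_eventually_abs_le {x : ℝ → ℝ} {r : ℝ}
    (h : ∀ᶠ ε in 𝓝[>] (0 : ℝ), |x ε| ≤ ε ^ r) : Moderate x := by
  refine ⟨r - 1, smallEv_iff_eventually.2 ?_⟩
  filter_upwards [h, Ioo_mem_nhdsGT zero_lt_one] with ε hx hε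
  exact hx.trans_lt (Real.rpow_lt_rpow_of_exponent_gt hε.1 hε.2 (by linarith))

theorem negligible_of_eventually_eq_zero {x : ℝ → ℝ} (h : ∀ᶠ ε in 𝓝[>] (0 : ℝ), x ε = 0) :
    Negligible x := fun n => smallEv_iff_eventually.2 <| by
  filter_upwards [h, self_mem_nhdsWithin] with ε hx hε
  simpa [hx] using Real.rpow_pos_of_pos hε (n : ℝ)

theorem mkR_eq_zero_iff {x : EMring} : mkR x = 0 ↔ Negligible x.1 :=
  Ideal.Quotient.eq_zero_iff_mem

theorem isUnit_mkR_of_eventually_le_abs (x : EMring) (m : ℝ)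
    (h : ∀ᶠ ε in 𝓝[>] (0 : ℝ), ε ^ m ≤ |x.1 ε|) : IsUnit (mkR x) := by
  have hx : ∀ᶠ ε in 𝓝[>] (0 : ℝ), 0 < ε ∧ ε ^ m ≤ |x.1 ε| := eventually_mem_nhdsWithin.and h
  let y : EMring := ⟨fun ε => (x.1 ε)⁻¹, moderate_of_eventually_abs_le (r := -m) <| hx.mono
    fun ε ⟨hε, hle⟩ => by
      rw [abs_inv, Real.rpow_neg hε.le]
      exact inv_anti₀ (Real.rpow_pos_of_pos hε m) hle⟩
  refine IsUnit.of_mul_eq_one (b := mkR y) ?_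
  rw [mkR, mkR, ← map_mul, ← map_one (Ideal.Quotient.mk NegIdeal), Ideal.Quotient.eq]
  refine negligible_of_eventually_eq_zero (hx.mono fun ε ⟨hε, hle⟩ => ?_)
  have hx0 : x.1 ε ≠ 0 := abs_pos.1 ((Real.rpow_pos_of_pos hε m).trans_le hle)
  simp [y, hx0]

theorem frequently_abs_lt_rpow_of_not_isUnit_mkR {x : EMring} (hx : ¬IsUnit (mkR x)) (q : ℝ) :
    ∃ᶠ ε in 𝓝[>] (0 : ℝ), |x.1 ε| < ε ^ q := fun h =>
  hx (isUnit_mkR_of_eventually_le_abs x q (h.mono fun _ => not_lt.1))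

theorem negligible_indicator_range_mul {t : ℕ → ℝ} {x : ℝ → ℝ} (ht : ∀ k, 0 < t k)
    (hxt : ∀ k, |x (t k)| < t k ^ k) : Negligible ((Set.range t).indicator (fun _ => 1) * x) := by
  intro q
  rw [smallEv_iff_eventually]
  have hsmall : ∀ᶠ ε in 𝓝[>] (0 : ℝ), ∀ k ∈ Finset.range q, ε < t k :=
    (Finset.range q).eventually_all.2 fun k _ => nhdsWithin_le_nhds (eventually_lt_nhds (ht k))
  filter_upwards [hsmall, Ioo_mem_nhdsGT zero_lt_one] with ε hε hε1
  rw [Pi.mul_apply, Real.rpow_natCast]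
  by_cases hr : ε ∈ Set.range t
  · obtain ⟨k, rfl⟩ := hr
    have hqk : q ≤ k := by
      by_contra hkq
      exact lt_irrefl _ (hε k (Finset.mem_range.2 (not_le.1 hkq)))
    rw [Set.indicator_of_mem (Set.mem_range_self k), one_mul]
    exact (hxt k).trans_le (pow_le_pow_of_le_one hε1.1.le hε1.2.le hqk)
  · rw [Set.indicator_of_notMem hr, zero_mul, abs_zero]
    exact pow_pos hε1.1 q

theorem not_negligible_indicator_range {t : ℕ → ℝ} (ht : Tendsto t atTop (𝓝[>] 0)) :
    ¬Negligible ((Set.range t).indicator fun _ => 1) := fun h => by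
  obtain ⟨k, hk⟩ := (ht.eventually (smallEv_iff_eventually.1 (h 0))).exists
  simp at hk

theorem Rbar.isUnit_of_mem_nonZeroDivisors {a : Rbar} (ha : a ∈ Rbar⁰) : IsUnit a := by
  obtain ⟨x, rfl⟩ := Ideal.Quotient.mk_surjective a
  by_contra hx
  have hsmall_seq : ∀ k : ℕ, ∃ t ∈ Set.Ioo (0 : ℝ) (1 / (k + 1)), |x.1 t| < t ^ k := fun k =>
    ((frequently_abs_lt_rpow_of_not_isUnit_mkR hx k).and_eventually
      (Ioo_mem_nhdsGT (by positivity))).exists.imp fun t ht => ⟨ht.2, by simpa using ht.1⟩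
  choose t ht hxt using hsmall_seq
  have ht0 : Tendsto t atTop (𝓝[>] 0) := tendsto_nhdsWithin_iff.2
    ⟨squeeze_zero (fun k => (ht k).1.le) (fun k => (ht k).2.le)
      tendsto_one_div_add_atTop_nhds_zero_nat, Eventually.of_forall fun k => (ht k).1⟩
  let e : EMring := ⟨(Set.range t).indicator fun _ => 1, chi_moderate _⟩
  have he : mkR e ≠ 0 := mkR_eq_zero_iff.not.2 (not_negligible_indicator_range ht0)
  refine he (mem_nonZeroDivisors_iff_right.1 ha _ ?_)
  rw [mkR, ← map_mul]
  exact mkR_eq_zero_iff.2 (negligible_indicator_range_mul (fun k => (ht k).1) hxt)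

/-- for an `R̄`-linear map `A : R̄ⁿ → R̄ⁿ`, injectivity, surjectivity and
invertibility of the determinant are equivalent. -/
theorem linearMap_injective_iff_surjective_iff_det_isUnit :
    ∀ (n : ℕ) (A : (Fin n → Rbar) →ₗ[Rbar] (Fin n → Rbar)),
      (Function.Injective A ↔ Function.Surjective A) ∧
      (Function.Injective A ↔ IsUnit (LinearMap.det A)) := by
  intro n A
  have hinj := A.injective_iff_isUnit_det fun _ => Rbar.isUnit_of_mem_nonZeroDivisors
  exact ⟨hinj.trans A.surjective_iff_isUnit_det.symm, hinj⟩
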